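/- Threshold-exceedance bound for generalized random coding with per-codeword input distributions (from the proof of Lemma 1, single-transmitter form). Let Q̃ be a probability distribution on 𝒳, let F be a nonempty finite index set with a probability distribution P_w on 𝒳 for each w ∈ F, let N ≥ 1, and let τ : 𝒴^N → ℝ be any function. Let X̃ and (X_w)_{w∈F} be mutually independent random vectors in 𝒳^N with i.i.d. components: the components of X̃ distributed as Q̃ and the components of X_w distributed as P_w. Conditionally on them, let Y ∈ 𝒴^N have distribution W^N(·|X̃). Then for every ρ ∈ (0,1] and s₂ > 0: Pr{ ∃ w ∈ F : W^N(Y|X_w) > e^{−N τ(Y)} } ≤ |F|^ρ · Σ_{y∈𝒴^N} ( ∏_{j=1}^N Σ_{x∈𝒳} Q̃(x) W(y_j|x) ) · ( max_{w∈F} ∏_{j=1}^N Σ_{x∈𝒳} P_w(x) W(y_j|x)^{s₂/ρ} )^ρ · e^{N s₂ τ(y)}. -/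

import Mathlib

open scoped BigOperators Classical

noncomputable section

/-- `W` is a discrete memoryless channel from `𝓧` to `𝓨`. -/
def IsDMC {𝓧 𝓨 : Type*} [Fintype 𝓨] (W : 𝓧 → 𝓨 → ℝ) : Prop :=
  (∀ x y, 0 ≤ W x y) ∧ ∀ x, ∑ y, W x y = 1

/-- `P` is a probability distribution on `𝓧`. -/
def IsDist {𝓧 : Type*} [Fintype 𝓧] (P : 𝓧 → ℝ) : Prop :=
  (∀ x, 0 ≤ P x) ∧ ∑ x, P x = 1

/-- The `N`-fold memoryless extension `W^N(y|x)`. -/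
def Wn {𝓧 𝓨 : Type*} (W : 𝓧 → 𝓨 → ℝ) {N : ℕ} (x : Fin N → 𝓧) (y : Fin N → 𝓨) : ℝ :=
  ∏ j, W (x j) (y j)

/-!
Fix the output `y` and put `t = e^{-N τ(y)}`, `r = s₂/ρ`. Gallager's trick bounds the indicator of
the union by `(∑_w (W^N(y|X_w)/t)^r)^ρ`; averaging over the independent codewords, Jensen's
inequality for the concave map `u ↦ u^ρ` moves the expectation inside, where each term factorizes
over the letters by memorylessness. Bounding the sum over `w` by `|F|` times the maximum and
averaging against the law of `Y` gives the claim.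
-/

open Finset

section ProductWeights

variable {ι κ : Type*} [Fintype ι] [DecidableEq ι] [Fintype κ]

lemma sum_pi_prod_eq_one {p : ι → κ → ℝ} (hp : ∀ i, ∑ k, p i k = 1) :
    ∑ x : ι → κ, ∏ i, p i (x i) = 1 := by
  rw [← Fintype.prod_sum]
  simp [hp]

lemma sum_pi_prod_mul_apply {p : ι → κ → ℝ} (hp : ∀ i, ∑ k, p i k = 1) (i₀ : ι) (f : κ → ℝ) :
    ∑ x : ι → κ, (∏ i, p i (x i)) * f (x i₀) = ∑ k, p i₀ k * f k := by
  have hsplit : ∀ x : ι → κ, (∏ i, p i (x i)) * f (x i₀)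
      = ∏ i, p i (x i) * (if i = i₀ then f (x i) else 1) := by
    intro x
    rw [prod_mul_distrib]
    simp
  simp_rw [hsplit]
  rw [← Fintype.prod_sum (fun i k => p i k * if i = i₀ then f k else 1),
    Fintype.prod_eq_single i₀ fun i hi => by simp [hi, hp i]]
  simp

end ProductWeights

lemma sum_sum_sum_mul_mul_mul {α β γ : Type*} [Fintype α] [Fintype β] [Fintype γ]
    (p : α → ℝ) (q : β → ℝ) (f : α → γ → ℝ) (g : β → γ → ℝ) :
    ∑ a, ∑ b, ∑ c, p a * q b * f a c * g b c
      = ∑ c, (∑ a, p a * f a c) * ∑ b, q b * g b c := by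
  simp_rw [sum_mul_sum, fun a b c => show p a * q b * f a c * g b c
    = p a * f a c * (q b * g b c) by ring]
  exact (sum_congr rfl fun a _ => sum_comm).trans sum_comm

lemma sum_le_card_mul_iSup {ι : Type*} [Fintype ι] (f : ι → ℝ) :
    ∑ i, f i ≤ Fintype.card ι * ⨆ i, f i := by
  simpa using sum_le_card_nsmul univ f _ fun i _ => le_ciSup (Set.finite_range f).bddAbove i

lemma sum_mul_rpow_le_rpow_sum_mul {Ω : Type*} [Fintype Ω] {μ g : Ω → ℝ}
    (hμ : ∀ ω, 0 ≤ μ ω) (hμ1 : ∑ ω, μ ω = 1) (hg : ∀ ω, 0 ≤ g ω)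
    {ρ : ℝ} (hρ0 : 0 ≤ ρ) (hρ1 : ρ ≤ 1) :
    ∑ ω, μ ω * g ω ^ ρ ≤ (∑ ω, μ ω * g ω) ^ ρ :=
  (Real.concaveOn_rpow hρ0 hρ1).le_map_sum (fun ω _ => hμ ω) hμ1 fun ω _ => hg ω

lemma indicator_exists_lt_le_rpow_sum {F : Type*} [Fintype F] {a : F → ℝ} (ha : ∀ w, 0 ≤ a w)
    {t r ρ : ℝ} (ht : 0 < t) (hr : 0 ≤ r) (hρ : 0 ≤ ρ) :
    (if ∃ w, t < a w then (1 : ℝ) else 0) ≤ (∑ w, (a w / t) ^ r) ^ ρ := by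
  have hterm : ∀ w, 0 ≤ (a w / t) ^ r := fun w => Real.rpow_nonneg (div_nonneg (ha w) ht.le) r
  split_ifs with h
  · obtain ⟨w, hw⟩ := h
    have hw1 : 1 ≤ (a w / t) ^ r := Real.one_le_rpow ((one_le_div ht).2 hw.le) hr
    exact Real.one_le_rpow (hw1.trans (single_le_sum (fun w _ => hterm w) (mem_univ w))) hρ
  · exact Real.rpow_nonneg (sum_nonneg fun w _ => hterm w) ρ

lemma sum_mul_indicator_exists_lt_le {Ω F : Type*} [Fintype Ω] [Fintype F] {μ : Ω → ℝ}
    (hμ : ∀ ω, 0 ≤ μ ω) (hμ1 : ∑ ω, μ ω = 1) {g : F → Ω → ℝ} (hg : ∀ w ω, 0 ≤ g w ω)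
    {t r ρ : ℝ} (ht : 0 < t) (hr : 0 ≤ r) (hρ0 : 0 ≤ ρ) (hρ1 : ρ ≤ 1) :
    ∑ ω, μ ω * (if ∃ w, t < g w ω then (1 : ℝ) else 0)
      ≤ (∑ w, ∑ ω, μ ω * (g w ω / t) ^ r) ^ ρ := by
  have hsum_nonneg : ∀ ω, 0 ≤ ∑ w, (g w ω / t) ^ r := fun ω =>
    sum_nonneg fun w _ => Real.rpow_nonneg (div_nonneg (hg w ω) ht.le) r
  calc ∑ ω, μ ω * (if ∃ w, t < g w ω then (1 : ℝ) else 0)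
      ≤ ∑ ω, μ ω * (∑ w, (g w ω / t) ^ r) ^ ρ :=
        sum_le_sum fun ω _ => mul_le_mul_of_nonneg_left
          (indicator_exists_lt_le_rpow_sum (fun w => hg w ω) ht hr hρ0) (hμ ω)
    _ ≤ (∑ ω, μ ω * ∑ w, (g w ω / t) ^ r) ^ ρ :=
        sum_mul_rpow_le_rpow_sum_mul hμ hμ1 hsum_nonneg hρ0 hρ1
    _ = (∑ w, ∑ ω, μ ω * (g w ω / t) ^ r) ^ ρ := by
        simp_rw [mul_sum]
        rw [sum_comm]

section Channel

variable {𝓧 𝓨 : Type*} {N : ℕ} {W : 𝓧 → 𝓨 → ℝ}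

lemma Wn_nonneg (hW : ∀ x y, 0 ≤ W x y) (x : Fin N → 𝓧) (y : Fin N → 𝓨) : 0 ≤ Wn W x y :=
  prod_nonneg fun _ _ => hW _ _

lemma Wn_rpow (hW : ∀ x y, 0 ≤ W x y) (x : Fin N → 𝓧) (y : Fin N → 𝓨) (r : ℝ) :
    Wn W x y ^ r = Wn (fun a b => W a b ^ r) x y :=
  (Real.finsetProd_rpow _ _ (fun _ _ => hW _ _) r).symm

lemma sum_prod_mul_Wn [Fintype 𝓧] (P : 𝓧 → ℝ) (y : Fin N → 𝓨) :
    ∑ x : Fin N → 𝓧, (∏ j, P (x j)) * Wn W x y = ∏ j, ∑ a, P a * W a (y j) := by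
  simp_rw [Wn, ← prod_mul_distrib]
  exact (Fintype.prod_sum fun j a => P a * W a (y j)).symm

lemma sum_prod_mul_indicator_exists_lt_Wn_le {F : Type*} [Fintype 𝓧] [Fintype F]
    (hW : ∀ x y, 0 ≤ W x y) {P : F → 𝓧 → ℝ} (hP : ∀ w, IsDist (P w)) (y : Fin N → 𝓨)
    {t r ρ : ℝ} (ht : 0 < t) (hr : 0 ≤ r) (hρ0 : 0 ≤ ρ) (hρ1 : ρ ≤ 1) :
    ∑ xw : F → Fin N → 𝓧, (∏ w, ∏ j, P w (xw w j)) *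
        (if ∃ w, t < Wn W (xw w) y then (1 : ℝ) else 0)
      ≤ (Fintype.card F * (⨆ w, ∏ j, ∑ x, P w x * W x (y j) ^ r) / t ^ r) ^ ρ := by
  have hPN : ∀ w, ∑ x : Fin N → 𝓧, ∏ j, P w (x j) = 1 := fun w =>
    sum_pi_prod_eq_one (p := fun _ => P w) fun _ => (hP w).2
  have hμ : ∀ xw : F → Fin N → 𝓧, 0 ≤ ∏ w, ∏ j, P w (xw w j) := fun xw =>
    prod_nonneg fun w _ => prod_nonneg fun j _ => (hP w).1 _
  have hμ1 : ∑ xw : F → Fin N → 𝓧, ∏ w, ∏ j, P w (xw w j) = 1 :=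
    sum_pi_prod_eq_one (p := fun w (x : Fin N → 𝓧) => ∏ j, P w (x j)) hPN
  have hmean : ∀ w, ∑ xw : F → Fin N → 𝓧, (∏ w', ∏ j, P w' (xw w' j)) * (Wn W (xw w) y / t) ^ r
      = (∏ j, ∑ x, P w x * W x (y j) ^ r) / t ^ r := by
    intro w
    rw [sum_pi_prod_mul_apply (p := fun w (x : Fin N → 𝓧) => ∏ j, P w (x j)) hPN w
      fun x => (Wn W x y / t) ^ r]
    simp_rw [Real.div_rpow (Wn_nonneg hW _ y) ht.le, Wn_rpow hW, mul_div_assoc', ← sum_div,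
      sum_prod_mul_Wn]
  calc _ ≤ (∑ w, ∑ xw : F → Fin N → 𝓧,
          (∏ w', ∏ j, P w' (xw w' j)) * (Wn W (xw w) y / t) ^ r) ^ ρ :=
        sum_mul_indicator_exists_lt_le (g := fun w (xw : F → Fin N → 𝓧) => Wn W (xw w) y) hμ hμ1
          (fun w xw => Wn_nonneg hW (xw w) y) ht hr hρ0 hρ1
    _ ≤ _ := by
      simp_rw [hmean, ← sum_div]
      gcongr
      · exact div_nonneg (sum_nonneg fun w _ => prod_nonneg fun j _ => sum_nonneg fun x _ =>
          mul_nonneg ((hP w).1 x) (Real.rpow_nonneg (hW x (y j)) r)) (Real.rpow_nonneg ht.le r)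
      · exact sum_le_card_mul_iSup _

end Channel

theorem stmt11_general {𝓧 𝓨 : Type*} [Fintype 𝓧] [Fintype 𝓨]
    {F : Type*} [Fintype F]
    (W : 𝓧 → 𝓨 → ℝ) (hW : IsDMC W)
    (Qt : 𝓧 → ℝ) (hQt : IsDist Qt) (P : F → 𝓧 → ℝ) (hP : ∀ w, IsDist (P w))
    (N : ℕ) (τ : (Fin N → 𝓨) → ℝ)
    (ρ s₂ : ℝ) (hρ : ρ ∈ Set.Ioc (0:ℝ) 1) (hs₂ : 0 < s₂) :
    (∑ xt : Fin N → 𝓧, ∑ xw : F → Fin N → 𝓧, ∑ y : Fin N → 𝓨,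
        (∏ j, Qt (xt j)) * (∏ w, ∏ j, P w (xw w j)) * Wn W xt y *
          (if ∃ w, Real.exp (-((N : ℝ) * τ y)) < Wn W (xw w) y then (1:ℝ) else 0))
      ≤ (Fintype.card F : ℝ) ^ ρ *
          ∑ y : Fin N → 𝓨,
            (∏ j, ∑ x : 𝓧, Qt x * W x (y j)) *
              (⨆ w : F, ∏ j, ∑ x : 𝓧, P w x * W x (y j) ^ (s₂ / ρ)) ^ ρ *
                Real.exp ((N : ℝ) * s₂ * τ y) := by
  obtain ⟨hρ0, hρ1⟩ := hρ
  refine (sum_sum_sum_mul_mul_mul _ _ _ _).trans_le ?_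
  rw [mul_sum]
  refine sum_le_sum fun y _ => ?_
  set S := ⨆ w : F, ∏ j, ∑ x : 𝓧, P w x * W x (y j) ^ (s₂ / ρ)
  have hS : 0 ≤ S := Real.iSup_nonneg fun w => prod_nonneg fun j _ => sum_nonneg fun x _ =>
    mul_nonneg ((hP w).1 x) (Real.rpow_nonneg (hW.1 x (y j)) _)
  have hensemble := sum_prod_mul_indicator_exists_lt_Wn_le hW.1 hP y
    (Real.exp_pos (-((N : ℝ) * τ y))) (div_pos hs₂ hρ0).le hρ0.le hρ1
  have hexp : ((Fintype.card F : ℝ) * S / Real.exp (-((N : ℝ) * τ y)) ^ (s₂ / ρ)) ^ ρ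
      = (Fintype.card F : ℝ) ^ ρ * S ^ ρ * Real.exp ((N : ℝ) * s₂ * τ y) := by
    rw [← Real.exp_mul, div_eq_mul_inv, ← Real.exp_neg,
      Real.mul_rpow (by positivity) (Real.exp_pos _).le, Real.mul_rpow (by positivity) hS,
      ← Real.exp_mul]
    congr 2
    field_simp
  rw [sum_prod_mul_Wn]
  calc _ ≤ (∏ j, ∑ x, Qt x * W x (y j)) *
        ((Fintype.card F : ℝ) * S / Real.exp (-((N : ℝ) * τ y)) ^ (s₂ / ρ)) ^ ρ :=
      mul_le_mul_of_nonneg_left hensemble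
        (prod_nonneg fun j _ => sum_nonneg fun x _ => mul_nonneg (hQt.1 x) (hW.1 x (y j)))
    _ = _ := by rw [hexp]; ring

/-- Threshold-exceedance bound for generalized random coding with
per-codeword input distributions (from the proof of Lemma 1, single-transmitter form). -/
theorem stmt11 {𝓧 𝓨 : Type*} [Fintype 𝓧] [Fintype 𝓨] [Nonempty 𝓧] [Nonempty 𝓨]
    {F : Type*} [Fintype F] [Nonempty F]
    (W : 𝓧 → 𝓨 → ℝ) (hW : IsDMC W)
    (Qt : 𝓧 → ℝ) (hQt : IsDist Qt) (P : F → 𝓧 → ℝ) (hP : ∀ w, IsDist (P w))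
    (N : ℕ) (hN : 1 ≤ N) (τ : (Fin N → 𝓨) → ℝ)
    (ρ s₂ : ℝ) (hρ : ρ ∈ Set.Ioc (0:ℝ) 1) (hs₂ : 0 < s₂) :
    (∑ xt : Fin N → 𝓧, ∑ xw : F → Fin N → 𝓧, ∑ y : Fin N → 𝓨,
        (∏ j, Qt (xt j)) * (∏ w, ∏ j, P w (xw w j)) * Wn W xt y *
          (if ∃ w, Real.exp (-((N : ℝ) * τ y)) < Wn W (xw w) y then (1:ℝ) else 0))
      ≤ (Fintype.card F : ℝ) ^ ρ *
          ∑ y : Fin N → 𝓨,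
            (∏ j, ∑ x : 𝓧, Qt x * W x (y j)) *
              (⨆ w : F, ∏ j, ∑ x : 𝓧, P w x * W x (y j) ^ (s₂ / ρ)) ^ ρ *
                Real.exp ((N : ℝ) * s₂ * τ y) :=
  stmt11_general W hW Qt hQt P hP N τ ρ s₂ hρ hs₂
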